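/- arXiv:1603.08954 — 2 statements merged into one kernel-verified Lean document; each statement's English description precedes it below -/
import Mathlib

section
/- Let A = [a_{ij}] be a d × n integer matrix with columns a₁, …, a_n ∈ ℤ^d, let β ∈ ℂ^d, let p ∈ ℂ[y₁, …, y_n], and let ᾱ ∈ ℂ^n with ᾱ₁ ≠ −1. Define f(x) = x^ᾱ p(log x) on the open positive orthant (ℝ_{>0})^n, and suppose that for every i ∈ {1, …, d} and every x ∈ (ℝ_{>0})^n one has Σ_{j=1}^n a_{ij} x_j ∂_j f(x) = β_i f(x). Let q ∈ ℂ[y₁, …, y_n] be a polynomial such that ∂₁[ x₁ · x^ᾱ · q(log x) ] = f(x) for all x ∈ (ℝ_{>0})^n, and set g(x) = x₁ · x^ᾱ · q(log x). Then for every i ∈ {1, …, d} and every x ∈ (ℝ_{>0})^n, Σ_{j=1}^n a_{ij} x_j ∂_j g(x) = (β_i + a_{i1}) g(x). -/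
/-- `x^ᾱ = exp(Σᵢ ᾱᵢ log xᵢ)` for `x` in the positive orthant. -/
noncomputable def xpow {n : ℕ} (x : Fin n → ℝ) (α : Fin n → ℂ) : ℂ :=
  Complex.exp (∑ i, α i * (Real.log (x i) : ℂ))

/-- Evaluation of a polynomial `p ∈ ℂ[y₁,…,yₙ]` at `(log x₁, …, log xₙ)`. -/
noncomputable def pevalLog {n : ℕ} (p : MvPolynomial (Fin n) ℂ) (x : Fin n → ℝ) : ℂ :=
  MvPolynomial.eval (fun i => (Real.log (x i) : ℂ)) p

/-- The partial derivative `∂ⱼ f` of a ℂ-valued function on `ℝ^n`. -/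
noncomputable def pd {n : ℕ} (f : (Fin n → ℝ) → ℂ) (j : Fin n) (x : Fin n → ℝ) : ℂ :=
  deriv (fun t : ℝ => f (Function.update x j t)) (x j)

/-! On the positive orthant `xⱼ ∂ⱼ (x^γ r(log x)) = x^γ ((γⱼ + ∂ⱼ) r)(log x)`, and a polynomial
vanishing at all `log x` vanishes. So the Euler equations for `f` and the antiderivative relation
become the polynomial identities `(Aᾱ)ᵢ p + Dᵢ p = βᵢ p` and `(ᾱ₁ + 1) q + ∂₁ q = p`, where
`Dᵢ = Σⱼ aᵢⱼ ∂ⱼ`. As `Dᵢ` commutes with `∂₁`, the polynomial `Dᵢ q - (βᵢ - (Aᾱ)ᵢ) q` is killed by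
`ᾱ₁ + 1 + ∂₁`, which is injective because `∂₁` lowers the degree in `y₁`. The resulting identity
`Dᵢ q = (βᵢ - (Aᾱ)ᵢ) q` is the shifted Euler equation for `g = x^(ᾱ + e₁) q(log x)`. -/

open Function

namespace MvPolynomial

variable {R σ : Type*}

theorem pderiv_comm [CommSemiring R] (i j : σ) (p : MvPolynomial σ R) :
    pderiv i (pderiv j p) = pderiv j (pderiv i p) := by
  classical
  ext m
  rcases eq_or_ne i j with rfl | hij
  · rfl
  simp only [coeff_pderiv, Finsupp.add_apply, Finsupp.single_eq_of_ne hij,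
    Finsupp.single_eq_of_ne hij.symm, add_zero, add_right_comm m]
  ring

/- Look at a monomial of `p` of maximal degree in `X i`: `pderiv i p` has no term there,
while `c • p` does. -/
theorem eq_zero_of_pderiv_eq_smul [CommSemiring R] [NoZeroDivisors R] {i : σ} {c : R}
    (hc : c ≠ 0) {p : MvPolynomial σ R} (h : pderiv i p = c • p) : p = 0 := by
  classical
  by_contra hp
  obtain ⟨m, hm, hmax⟩ := p.support.exists_max_image (· i) (support_nonempty.2 hp)
  have htop : coeff (m + Finsupp.single i 1) p = 0 :=
    notMem_support_iff.1 fun hm' => by simpa using hmax _ hm'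
  have hcoeff := congrArg (coeff m) h
  rw [coeff_pderiv, htop, zero_mul, coeff_smul, smul_eq_mul] at hcoeff
  exact mul_ne_zero hc (mem_support_iff.1 hm) hcoeff.symm

theorem hasDerivAt_eval_update {𝕜 : Type*} [NontriviallyNormedField 𝕜] [DecidableEq σ]
    (p : MvPolynomial σ 𝕜) (z : σ → 𝕜) (j : σ) :
    HasDerivAt (fun s => eval (update z j s) p) (eval z (pderiv j p)) (z j) := by
  induction p using MvPolynomial.induction_on with
  | C a => simpa using hasDerivAt_const (z j) a
  | add p q hp hq => simpa using hp.fun_add hq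
  | mul_X p i hp =>
    have hi : HasDerivAt (fun s => update z j s i) ((Pi.single j 1 : σ → 𝕜) i) (z j) := by
      rcases eq_or_ne i j with rfl | hij
      · simpa using hasDerivAt_id' (z i)
      · simpa [hij] using hasDerivAt_const (z j) (z i)
    simpa [pderiv_mul, pderiv_X, Pi.single_apply, eq_comm, apply_ite (eval z), add_comm, mul_comm]
      using hp.fun_mul hi

section TwistedEuler

variable [CommRing R] [Fintype σ]

/-- The coefficient polynomial of `Σⱼ aⱼ xⱼ ∂ⱼ (x^γ r(log x)) = x^γ (twistedEuler a γ r)(log x)`. -/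
noncomputable def twistedEuler (a γ : σ → R) (r : MvPolynomial σ R) : MvPolynomial σ R :=
  ∑ j, C (a j) * (C (γ j) * r + pderiv j r)

theorem twistedEuler_eq (a γ : σ → R) (r : MvPolynomial σ R) :
    twistedEuler a γ r = C (∑ j, a j * γ j) * r + ∑ j, C (a j) * pderiv j r := by
  simp only [twistedEuler, mul_add, Finset.sum_add_distrib, map_sum, map_mul, Finset.sum_mul,
    mul_assoc]

theorem twistedEuler_add_single [NoZeroDivisors R] [DecidableEq σ] {a α : σ → R} {b : R}
    {i : σ} (hα : α i + 1 ≠ 0) {p q : MvPolynomial σ R} (hp : twistedEuler a α p = C b * p)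
    (hq : C (α i + 1) * q + pderiv i q = p) :
    twistedEuler a (α + Pi.single i 1) q = C (b + a i) * q := by
  set l := α i + 1
  set D : MvPolynomial σ R → MvPolynomial σ R := fun r => ∑ j, C (a j) * pderiv j r with hD
  set c := b - ∑ j, a j * α j
  have hDp : D p = C c * p := by
    rw [twistedEuler_eq] at hp
    simp only [c, map_sub]
    linear_combination hp
  have hD_comm : D p = C l * D q + pderiv i (D q) := by
    simp only [hD, ← hq, map_add, pderiv_C_mul, map_sum, Finset.mul_sum, pderiv_comm i,
      ← Finset.sum_add_distrib]
    exact Finset.sum_congr rfl fun j _ => by ring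
  have hDq : D q = C c * q := by
    refine sub_eq_zero.1 (eq_zero_of_pderiv_eq_smul (i := i) (neg_ne_zero.2 hα) ?_)
    simp only [map_sub, pderiv_C_mul, smul_eq_C_mul, map_neg]
    linear_combination hD_comm.symm.trans hDp - C c * hq
  rw [twistedEuler_eq]
  change _ + D q = _
  rw [hDq]
  simp only [c, Pi.add_apply, Pi.single_apply, mul_add, mul_ite, mul_one, mul_zero,
    Finset.sum_add_distrib, Finset.sum_ite_eq', Finset.mem_univ, if_true, C_add, C_sub]
  ring

end TwistedEuler

end MvPolynomial

open MvPolynomial Filter Topology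

theorem hasDerivAt_cexp_mul_eval_update {σ : Type*} [Fintype σ] [DecidableEq σ]
    (γ z : σ → ℂ) (r : MvPolynomial σ ℂ) (j : σ) :
    HasDerivAt (fun s => Complex.exp (∑ i, γ i * update z j s i) * eval (update z j s) r)
      (Complex.exp (∑ i, γ i * z i) * eval z (C (γ j) * r + pderiv j r)) (z j) := by
  have hlin : ∀ w : σ → ℂ, ∑ i, γ i * w i = eval w (∑ i, C (γ i) * X i) := by simp
  have hexp := (hasDerivAt_eval_update (∑ i, C (γ i) * X i) z j).cexp
  simp only [← hlin] at hexp
  refine (hexp.fun_mul (hasDerivAt_eval_update r z j)).congr_deriv ?_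
  simp only [update_eq_self, map_sum, Derivation.leibniz, pderiv_X, Pi.single_apply, smul_eq_mul,
    mul_ite, mul_one, mul_zero, derivation_C, add_zero, Finset.sum_ite_eq', Finset.mem_univ,
    if_true, eval_C, map_add, map_mul]
  ring

theorem mul_pd_xpow_mul_pevalLog {n : ℕ} (γ : Fin n → ℂ) (r : MvPolynomial (Fin n) ℂ)
    {x : Fin n → ℝ} (hx : ∀ j, 0 < x j) (j : Fin n) :
    (x j : ℂ) * pd (fun y => xpow y γ * pevalLog r y) j x
      = xpow x γ * pevalLog (C (γ j) * r + pderiv j r) x := by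
  set L : Fin n → ℂ := fun i => (Real.log (x i) : ℂ)
  have hslice : (fun t => xpow (update x j t) γ * pevalLog r (update x j t))
      = (fun s => Complex.exp (∑ i, γ i * update L j s i) * eval (update L j s) r)
        ∘ (fun t : ℝ => (Real.log t : ℂ)) := by
    funext t
    simp only [xpow, pevalLog, comp_apply, apply_update (fun _ v => (Real.log v : ℂ))]
    rfl
  have hlog : HasDerivAt (fun t : ℝ => (Real.log t : ℂ)) ((x j)⁻¹ : ℝ) (x j) :=
    (Real.hasDerivAt_log (hx j).ne').ofReal_comp
  rw [pd, hslice, ((hasDerivAt_cexp_mul_eval_update γ L r j).comp (x j) hlog).deriv]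
  have hxj : (x j : ℂ) ≠ 0 := Complex.ofReal_ne_zero.2 (hx j).ne'
  simp only [xpow, pevalLog, L]
  push_cast
  field_simp

theorem xpow_ne_zero {n : ℕ} (x : Fin n → ℝ) (α : Fin n → ℂ) : xpow x α ≠ 0 :=
  Complex.exp_ne_zero _

theorem xpow_add_single {n : ℕ} (α : Fin n → ℂ) {x : Fin n → ℝ} {j : Fin n} (hx : 0 < x j) :
    xpow x (α + Pi.single j 1) = x j * xpow x α := by
  simp only [xpow, Pi.add_apply, add_mul, Finset.sum_add_distrib, Complex.exp_add,
    Pi.single_apply, ite_mul, one_mul, zero_mul, Finset.sum_ite_eq', Finset.mem_univ, if_true]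
  rw [← Complex.ofReal_exp, Real.exp_log hx]
  ring

theorem eq_of_pevalLog_eq {n : ℕ} {p q : MvPolynomial (Fin n) ℂ}
    (h : ∀ x : Fin n → ℝ, (∀ j, 0 < x j) → pevalLog p x = pevalLog q x) : p = q := by
  refine funext_set (fun _ => Set.range ((↑) : ℝ → ℂ))
    (fun _ => Set.infinite_range_of_injective Complex.ofReal_injective) fun w hw => ?_
  choose y hy using fun i => hw i (Set.mem_univ i)
  obtain rfl : (fun i => (y i : ℂ)) = w := funext hy
  simpa [pevalLog] using h (fun i => Real.exp (y i)) fun i => Real.exp_pos _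

theorem pd_congr_of_eventuallyEq {n : ℕ} {f g : (Fin n → ℝ) → ℂ} {x : Fin n → ℝ}
    (h : f =ᶠ[𝓝 x] g) (j : Fin n) : pd f j x = pd g j x := by
  have hslice : Tendsto (fun t : ℝ => update x j t) (𝓝 (x j)) (𝓝 x) := by
    have hcont : Continuous fun t : ℝ => update x j t := continuous_const.update j continuous_id
    simpa using hcont.tendsto (x j)
  exact EventuallyEq.deriv_eq (hslice.eventually h)

theorem eventually_pos_nhds {n : ℕ} {x : Fin n → ℝ} (hx : ∀ j, 0 < x j) :
    ∀ᶠ y in 𝓝 x, ∀ j, 0 < y j :=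
  eventually_all.2 fun j => (continuous_apply j).continuousAt.eventually (lt_mem_nhds (hx j))

theorem sum_mul_pd_xpow_mul_pevalLog {n : ℕ} (a γ : Fin n → ℂ) (r : MvPolynomial (Fin n) ℂ)
    {x : Fin n → ℝ} (hx : ∀ j, 0 < x j) :
    ∑ j, a j * x j * pd (fun y => xpow y γ * pevalLog r y) j x
      = xpow x γ * pevalLog (twistedEuler a γ r) x := by
  simp_rw [mul_assoc, mul_pd_xpow_mul_pevalLog γ r hx]
  simp only [twistedEuler, pevalLog, map_sum, map_mul, eval_C, Finset.mul_sum]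
  exact Finset.sum_congr rfl fun j _ => by ring

/-- **Lemma `lemma:fixEulers`.** If `f = x^ᾱ p(log x)` satisfies the Euler
operator equations `Σⱼ a_{ij} xⱼ ∂ⱼ f = βᵢ f`, and `g = x₁ x^ᾱ q(log x)` is an
antiderivative of `f` with respect to `∂₁`, then `g` satisfies
`Σⱼ a_{ij} xⱼ ∂ⱼ g = (βᵢ + a_{i1}) g`. -/
theorem antiderivative_satisfies_shifted_euler
    (d n : ℕ) (hn : 0 < n) (A : Matrix (Fin d) (Fin n) ℤ) (β : Fin d → ℂ)
    (p q : MvPolynomial (Fin n) ℂ) (ᾱ : Fin n → ℂ) (hᾱ : ᾱ ⟨0, hn⟩ ≠ -1)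
    (f g : (Fin n → ℝ) → ℂ)
    (hf : ∀ x : Fin n → ℝ, f x = xpow x ᾱ * pevalLog p x)
    (heuler : ∀ (i : Fin d) (x : Fin n → ℝ), (∀ j, 0 < x j) →
      ∑ j, (A i j : ℂ) * (x j : ℂ) * pd f j x = β i * f x)
    (hg : ∀ x : Fin n → ℝ, g x = (x ⟨0, hn⟩ : ℂ) * xpow x ᾱ * pevalLog q x)
    (hanti : ∀ x : Fin n → ℝ, (∀ j, 0 < x j) → pd g ⟨0, hn⟩ x = f x) :
    ∀ (i : Fin d) (x : Fin n → ℝ), (∀ j, 0 < x j) →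
      ∑ j, (A i j : ℂ) * (x j : ℂ) * pd g j x = (β i + (A i ⟨0, hn⟩ : ℂ)) * g x := by
  intro i x hx
  obtain rfl : f = fun y => xpow y ᾱ * pevalLog p y := funext hf
  set j₀ : Fin n := ⟨0, hn⟩
  set γ := ᾱ + Pi.single j₀ 1
  set a : Fin n → ℂ := fun j => A i j
  have hg_eq : ∀ y : Fin n → ℝ, (∀ j, 0 < y j) → g y = xpow y γ * pevalLog q y := fun y hy => by
    rw [hg, xpow_add_single ᾱ (hy j₀)]
  have hpd_g : ∀ y : Fin n → ℝ, (∀ j, 0 < y j) → ∀ j,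
      pd g j y = pd (fun y => xpow y γ * pevalLog q y) j y :=
    fun y hy => pd_congr_of_eventuallyEq ((eventually_pos_nhds hy).mono hg_eq)
  have hp : twistedEuler a ᾱ p = C (β i) * p :=
    eq_of_pevalLog_eq fun y hy => mul_left_cancel₀ (xpow_ne_zero y ᾱ) <| by
      rw [← sum_mul_pd_xpow_mul_pevalLog a ᾱ p hy, heuler i y hy]
      simp [pevalLog, mul_left_comm]
  have hq : C (ᾱ j₀ + 1) * q + pderiv j₀ q = p :=
    eq_of_pevalLog_eq fun y hy => mul_left_cancel₀ (xpow_ne_zero y γ) <| by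
      calc xpow y γ * pevalLog (C (ᾱ j₀ + 1) * q + pderiv j₀ q) y
          = y j₀ * pd g j₀ y := by rw [hpd_g y hy, mul_pd_xpow_mul_pevalLog γ q hy]; simp [γ]
        _ = xpow y γ * pevalLog p y := by rw [hanti y hy, xpow_add_single ᾱ (hy j₀), mul_assoc]
  have hshift := twistedEuler_add_single (by rwa [Ne, add_eq_zero_iff_eq_neg]) hp hq
  calc ∑ j, (A i j : ℂ) * (x j : ℂ) * pd g j x
      = xpow x γ * pevalLog (twistedEuler a γ q) x := by
        simp only [hpd_g x hx]
        exact sum_mul_pd_xpow_mul_pevalLog a γ q hx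
    _ = (β i + (A i j₀ : ℂ)) * g x := by
        rw [hshift, hg_eq x hx]
        simp [pevalLog, a, mul_left_comm]
end

section
/- Let n be a positive integer, p ∈ ℂ[y₁, …, y_n], ᾱ ∈ ℂ^n with ᾱ₁ ≠ −1, and μ ∈ ℕ^n with ᾱ₁ − μ₁ ≠ −1. Let f(x) = x^ᾱ p(log x) on (ℝ_{>0})^n and let q ∈ ℂ[y₁, …, y_n] satisfy ∂₁[ x₁ · x^ᾱ · q(log x) ] = f(x) for all x ∈ (ℝ_{>0})^n; set g(x) = x₁ · x^ᾱ · q(log x). Then there exist polynomials p̃, q̃ ∈ ℂ[y₁, …, y_n] such that, for all x ∈ (ℝ_{>0})^n: (a) ∂^μ f(x) = x^{ᾱ−μ} p̃(log x); (b) ∂₁[ x₁ · x^{ᾱ−μ} · q̃(log x) ] = x^{ᾱ−μ} p̃(log x); and (c) ∂^μ g(x) = x₁ · x^{ᾱ−μ} · q̃(log x). In other words, applying ∂^μ commutes with taking the antiderivative ∂₁^{-1} of functions of the form x^ᾱ p(log x). -/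
/-- The iterated partial derivative `∂^μ = ∂₁^{μ₁} ⋯ ∂ₙ^{μₙ}`. -/
noncomputable def pdMulti {n : ℕ} (μ : Fin n → ℕ) (f : (Fin n → ℝ) → ℂ) :
    (Fin n → ℝ) → ℂ :=
  (List.finRange n).foldr (fun j g => (fun h => pd h j)^[μ j] g) f


/-! A function `x ↦ x^α p(log x)` is determined by its symbol `(α, p)`, and differentiation in
`xⱼ` acts on symbols by `(α, p) ↦ (α - eⱼ, αⱼ p + ∂p/∂yⱼ)`. These operators commute, because the
`∂/∂yⱼ` do. Now `g` has symbol `s = (α + e₁, q)` and `f = ∂₁g` has symbol `∂₁s`, so `∂^μ f` has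
symbol `∂^μ ∂₁ s = ∂₁ ∂^μ s`, i.e. it is `∂₁` of the function with symbol `∂^μ s`, which is `∂^μ g`.
-/

open MvPolynomial Set

theorem MvPolynomial.pderiv_pderiv_comm {R σ : Type*} [CommSemiring R] (i j : σ)
    (p : MvPolynomial σ R) : pderiv i (pderiv j p) = pderiv j (pderiv i p) := by
  classical
  induction p using MvPolynomial.induction_on with
  | C a => simp
  | add p q hp hq => simp [hp, hq]
  | mul_X p k hp =>
    simp only [pderiv_mul, map_add, pderiv_X, hp, Pi.single_apply]
    split_ifs <;> simp; ring

theorem MvPolynomial.hasDerivAt_eval_update_s8 {σ 𝕜 : Type*} [DecidableEq σ]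
    [NontriviallyNormedField 𝕜] (v : σ → 𝕜) (j : σ) (p : MvPolynomial σ 𝕜) (z : 𝕜) :
    HasDerivAt (fun t => eval (Function.update v j t) p)
      (eval (Function.update v j z) (pderiv j p)) z := by
  induction p using MvPolynomial.induction_on with
  | C a => simpa using hasDerivAt_const z a
  | add p q hp hq => simp only [map_add]; exact hp.add hq
  | mul_X p i hp =>
    rcases eq_or_ne i j with rfl | hij
    · simpa [pderiv_mul, mul_comm, add_comm] using hp.fun_mul (hasDerivAt_id' z)
    · simpa [pderiv_mul, pderiv_X_of_ne hij, Function.update_of_ne hij, mul_comm]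
        using hp.mul_const (v i)

variable {n : ℕ}

def posOrthant (n : ℕ) : Set (Fin n → ℝ) := {x | ∀ i, 0 < x i}

theorem hasDerivAt_pevalLog_update (p : MvPolynomial (Fin n) ℂ) {x : Fin n → ℝ} {j : Fin n}
    (hx : 0 < x j) :
    HasDerivAt (fun t => pevalLog p (Function.update x j t))
      ((x j : ℂ)⁻¹ * pevalLog (pderiv j p) x) (x j) := by
  set v : Fin n → ℂ := fun i => (Real.log (x i) : ℂ)
  have hlog : HasDerivAt (fun t : ℝ => (Real.log t : ℂ)) (x j : ℂ)⁻¹ (x j) := by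
    simpa using (Real.hasDerivAt_log hx.ne').ofReal_comp
  have hupdate (t : ℝ) : (fun i => (Real.log (Function.update x j t i) : ℂ))
      = Function.update v j (Real.log t : ℂ) :=
    funext fun i => Function.apply_update (fun _ t => (Real.log t : ℂ)) x j t i
  have hv : Function.update v j (Real.log (x j) : ℂ) = v := Function.update_eq_self j v
  have := (hasDerivAt_eval_update_s8 v j p _).comp (x j) hlog
  rw [hv] at this
  simpa [pevalLog, Function.comp_def, hupdate, mul_comm] using this

theorem xpow_eq_exp_pevalLog (x : Fin n → ℝ) (α : Fin n → ℂ) :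
    xpow x α = Complex.exp (pevalLog (∑ i, C (α i) * X i) x) := by
  simp [xpow, pevalLog]

theorem hasDerivAt_xpow_update (α : Fin n → ℂ) {x : Fin n → ℝ} {j : Fin n} (hx : 0 < x j) :
    HasDerivAt (fun t => xpow (Function.update x j t) α)
      (xpow x α * ((x j : ℂ)⁻¹ * α j)) (x j) := by
  have := (hasDerivAt_pevalLog_update (∑ i, C (α i) * X i) hx).cexp
  rw [Function.update_eq_self] at this
  simp_rw [xpow_eq_exp_pevalLog]
  convert this using 3
  simp [pevalLog, pderiv_X, Pi.single_apply]

theorem xpow_add (x : Fin n → ℝ) (α β : Fin n → ℂ) : xpow x (α + β) = xpow x α * xpow x β := by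
  simp [xpow, add_mul, Finset.sum_add_distrib, Complex.exp_add]

theorem xpow_single_one {x : Fin n → ℝ} {j : Fin n} (hx : 0 < x j) :
    xpow x (Pi.single j 1) = x j := by
  simp [xpow, Pi.single_apply, ← Complex.ofReal_exp, Real.exp_log hx]

theorem Set.EqOn.pd {f g : (Fin n → ℝ) → ℂ} (h : EqOn f g (posOrthant n)) (j : Fin n) :
    EqOn (pd f j) (pd g j) (posOrthant n) := by
  intro x hx
  apply Filter.EventuallyEq.deriv_eq
  filter_upwards [Ioi_mem_nhds (hx j)] with t ht
  refine h fun i => ?_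
  rcases eq_or_ne i j with rfl | hij
  · simpa using ht
  · simpa [Function.update_of_ne hij] using hx i

noncomputable section

abbrev LogPowerSymbol (n : ℕ) := (Fin n → ℂ) × MvPolynomial (Fin n) ℂ

namespace LogPowerSymbol

def toFun (s : LogPowerSymbol n) (x : Fin n → ℝ) : ℂ := xpow x s.1 * pevalLog s.2 x

def diff (j : Fin n) (s : LogPowerSymbol n) : LogPowerSymbol n :=
  (s.1 - Pi.single j 1, C (s.1 j) * s.2 + pderiv j s.2)

def diffMulti (μ : Fin n → ℕ) (s : LogPowerSymbol n) : LogPowerSymbol n :=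
  (List.finRange n).foldr (fun j s => (diff j)^[μ j] s) s

theorem toFun_add_single (α : Fin n → ℂ) (p : MvPolynomial (Fin n) ℂ) {x : Fin n → ℝ}
    {j : Fin n} (hx : 0 < x j) :
    toFun (α + Pi.single j 1, p) x = x j * xpow x α * pevalLog p x := by
  rw [toFun, xpow_add, xpow_single_one hx, mul_comm (xpow x α)]

theorem eqOn_pd_toFun (s : LogPowerSymbol n) (j : Fin n) :
    EqOn (pd s.toFun j) (diff j s).toFun (posOrthant n) := by
  intro x hx
  have hxpow : xpow x s.1 = x j * xpow x (s.1 - Pi.single j 1) := by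
    rw [← xpow_single_one (hx j), ← xpow_add, add_sub_cancel]
  have hxj : (x j : ℂ) ≠ 0 := Complex.ofReal_ne_zero.2 (hx j).ne'
  have := (hasDerivAt_xpow_update s.1 (hx j)).fun_mul (hasDerivAt_pevalLog_update s.2 (hx j))
  rw [Function.update_eq_self] at this
  refine this.deriv.trans ?_
  simp only [diff, toFun, pevalLog, map_add, map_mul, eval_C]
  rw [hxpow]
  field_simp

theorem eqOn_iterate_pd {f : (Fin n → ℝ) → ℂ} {s : LogPowerSymbol n}
    (h : EqOn f s.toFun (posOrthant n)) (j : Fin n) (m : ℕ) :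
    EqOn ((pd · j)^[m] f) ((diff j)^[m] s).toFun (posOrthant n) := by
  induction m with
  | zero => exact h
  | succ m ih =>
    rw [Function.iterate_succ_apply', Function.iterate_succ_apply']
    exact (ih.pd j).trans (eqOn_pd_toFun _ j)

theorem eqOn_foldr_iterate_pd {f : (Fin n → ℝ) → ℂ} {s : LogPowerSymbol n}
    (h : EqOn f s.toFun (posOrthant n)) (μ : Fin n → ℕ) (l : List (Fin n)) :
    EqOn (l.foldr (fun j g => (pd · j)^[μ j] g) f)
      (l.foldr (fun j s => (diff j)^[μ j] s) s).toFun (posOrthant n) := by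
  induction l with
  | nil => exact h
  | cons j l ih => exact eqOn_iterate_pd ih j (μ j)

theorem eqOn_pdMulti {f : (Fin n → ℝ) → ℂ} {s : LogPowerSymbol n}
    (h : EqOn f s.toFun (posOrthant n)) (μ : Fin n → ℕ) :
    EqOn (pdMulti μ f) (diffMulti μ s).toFun (posOrthant n) :=
  eqOn_foldr_iterate_pd h μ _

theorem diff_commute (i j : Fin n) : Function.Commute (diff i) (diff j) := by
  intro s
  rcases eq_or_ne i j with rfl | hij
  · rfl
  refine Prod.ext (sub_right_comm _ _ _) ?_
  simp only [diff, Pi.sub_apply, Pi.single_eq_of_ne hij, Pi.single_eq_of_ne hij.symm, sub_zero,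
    map_add, pderiv_C_mul, pderiv_pderiv_comm i j]
  ring

theorem diff_foldr_iterate (i : Fin n) (μ : Fin n → ℕ) (l : List (Fin n))
    (s : LogPowerSymbol n) :
    diff i (l.foldr (fun j s => (diff j)^[μ j] s) s)
      = l.foldr (fun j s => (diff j)^[μ j] s) (diff i s) := by
  induction l with
  | nil => rfl
  | cons j l ih => simp only [List.foldr_cons, ← ih, ((diff_commute i j).iterate_right _).eq]

theorem diff_diffMulti (i : Fin n) (μ : Fin n → ℕ) (s : LogPowerSymbol n) :
    diff i (diffMulti μ s) = diffMulti μ (diff i s) :=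
  diff_foldr_iterate i μ _ s

theorem iterate_diff_fst (j : Fin n) (m : ℕ) (s : LogPowerSymbol n) :
    ((diff j)^[m] s).1 = s.1 - Pi.single j (m : ℂ) := by
  induction m with
  | zero => simp
  | succ m ih =>
    rw [Function.iterate_succ_apply', diff, ih, Nat.cast_succ, Pi.single_add, sub_sub]

theorem foldr_iterate_diff_fst (μ : Fin n → ℕ) (l : List (Fin n)) (s : LogPowerSymbol n) :
    (l.foldr (fun j s => (diff j)^[μ j] s) s).1
      = s.1 - (l.map fun j => Pi.single j (μ j : ℂ)).sum := by
  induction l with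
  | nil => simp
  | cons j l ih =>
    rw [List.foldr_cons, iterate_diff_fst, ih, List.map_cons, List.sum_cons, sub_sub, add_comm]

theorem diffMulti_fst (μ : Fin n → ℕ) (s : LogPowerSymbol n) :
    (diffMulti μ s).1 = s.1 - fun i => (μ i : ℂ) := by
  rw [diffMulti, foldr_iterate_diff_fst, ← Fin.sum_univ_def, Finset.univ_sum_single]

end LogPowerSymbol

end

open LogPowerSymbol

theorem iterated_derivative_commutes_with_antiderivative_general
    (n : ℕ) (hn : 0 < n) (q : MvPolynomial (Fin n) ℂ)
    (ᾱ : Fin n → ℂ) (μ : Fin n → ℕ)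
    (f g : (Fin n → ℝ) → ℂ)
    (hg : ∀ x : Fin n → ℝ, g x = (x ⟨0, hn⟩ : ℂ) * xpow x ᾱ * pevalLog q x)
    (hanti : ∀ x : Fin n → ℝ, (∀ j, 0 < x j) → pd g ⟨0, hn⟩ x = f x) :
    ∃ pt qt : MvPolynomial (Fin n) ℂ,
      (∀ x : Fin n → ℝ, (∀ j, 0 < x j) →
        pdMulti μ f x = xpow x (fun i => ᾱ i - (μ i : ℂ)) * pevalLog pt x) ∧
      (∀ x : Fin n → ℝ, (∀ j, 0 < x j) →
        pd (fun y => (y ⟨0, hn⟩ : ℂ) * xpow y (fun i => ᾱ i - (μ i : ℂ)) * pevalLog qt y)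
            ⟨0, hn⟩ x
          = xpow x (fun i => ᾱ i - (μ i : ℂ)) * pevalLog pt x) ∧
      (∀ x : Fin n → ℝ, (∀ j, 0 < x j) →
        pdMulti μ g x = (x ⟨0, hn⟩ : ℂ) * xpow x (fun i => ᾱ i - (μ i : ℂ)) * pevalLog qt x) := by
  set z : Fin n := ⟨0, hn⟩
  set β : Fin n → ℂ := fun i => ᾱ i - (μ i : ℂ)
  set s : LogPowerSymbol n := (ᾱ + Pi.single z 1, q)
  have hgs : EqOn g s.toFun (posOrthant n) := fun x hx => by rw [hg, toFun_add_single _ _ (hx z)]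
  have hfs : EqOn f (diff z s).toFun (posOrthant n) := fun x hx =>
    (hanti x hx).symm.trans ((hgs.pd z hx).trans (eqOn_pd_toFun s z hx))
  have hs : diffMulti μ s = (β + Pi.single z 1, (diffMulti μ s).2) :=
    Prod.ext ((diffMulti_fst μ s).trans (add_sub_right_comm _ _ _)) rfl
  have hds : diff z (diffMulti μ s) = (β, (diff z (diffMulti μ s)).2) :=
    Prod.ext (by rw [hs, diff]; exact add_sub_cancel_right _ _) rfl
  have hG : EqOn (fun x => x z * xpow x β * pevalLog (diffMulti μ s).2 x) (diffMulti μ s).toFun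
      (posOrthant n) := fun x hx => by rw [hs, toFun_add_single _ _ (hx z)]
  refine ⟨(diff z (diffMulti μ s)).2, (diffMulti μ s).2, fun x hx => ?_, fun x hx => ?_,
    fun x hx => ?_⟩
  · rw [eqOn_pdMulti hfs μ hx, ← diff_diffMulti, hds, toFun]
  · rw [hG.pd z hx, eqOn_pd_toFun _ z hx, hds, toFun]
  · exact (eqOn_pdMulti hgs μ hx).trans (hG hx).symm

/-- **Lemma `lemma:commutingDerivatives`.** Applying `∂^μ` commutes with
the antiderivative `∂₁⁻¹` of functions of the form `x^ᾱ p(log x)`. -/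
theorem iterated_derivative_commutes_with_antiderivative
    (n : ℕ) (hn : 0 < n) (p q : MvPolynomial (Fin n) ℂ)
    (ᾱ : Fin n → ℂ) (μ : Fin n → ℕ)
    (hᾱ : ᾱ ⟨0, hn⟩ ≠ -1) (hᾱμ : ᾱ ⟨0, hn⟩ - (μ ⟨0, hn⟩ : ℂ) ≠ -1)
    (f g : (Fin n → ℝ) → ℂ)
    (hf : ∀ x : Fin n → ℝ, f x = xpow x ᾱ * pevalLog p x)
    (hg : ∀ x : Fin n → ℝ, g x = (x ⟨0, hn⟩ : ℂ) * xpow x ᾱ * pevalLog q x)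
    (hanti : ∀ x : Fin n → ℝ, (∀ j, 0 < x j) → pd g ⟨0, hn⟩ x = f x) :
    ∃ pt qt : MvPolynomial (Fin n) ℂ,
      (∀ x : Fin n → ℝ, (∀ j, 0 < x j) →
        pdMulti μ f x = xpow x (fun i => ᾱ i - (μ i : ℂ)) * pevalLog pt x) ∧
      (∀ x : Fin n → ℝ, (∀ j, 0 < x j) →
        pd (fun y => (y ⟨0, hn⟩ : ℂ) * xpow y (fun i => ᾱ i - (μ i : ℂ)) * pevalLog qt y)
            ⟨0, hn⟩ x
          = xpow x (fun i => ᾱ i - (μ i : ℂ)) * pevalLog pt x) ∧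
      (∀ x : Fin n → ℝ, (∀ j, 0 < x j) →
        pdMulti μ g x = (x ⟨0, hn⟩ : ℂ) * xpow x (fun i => ᾱ i - (μ i : ℂ)) * pevalLog qt x) :=
  iterated_derivative_commutes_with_antiderivative_general n hn q ᾱ μ f g hg hanti
end
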